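/- Let T > 0, let a, b, c, f : (0,T) × (0,1) → ℝ with sup_{0<x<1, 0<t≤T} |f(t,x)| < +∞, let u ∈ C⁰([0,T] × [0,1]) with u[t] ∈ C²((0,1)) for almost all t ∈ (0,T), ∂u/∂t continuous on (0,T) × [0,1], ∂u/∂x(t,0) and ∂u/∂x(t,1) existing for all t ∈ (0,T], satisfying ∂u/∂t = a·∂²u/∂x² + b·∂u/∂x + c·u + f for almost all t and all x ∈ (0,1). Let μ₀, μ₁ > 0, λ₀, λ₁ ∈ ℝ be constants. Suppose a ≥ 0 on (0,T)×(0,1), there exist σ > 0 and η ∈ C²([0,1];(0,+∞)) with aη'' + bη' + (σ+c)η ≤ 0 on (0,T)×(0,1), and both μ₀η'(0) − λ₀η(0) < 0 and μ₁η'(1) + λ₁η(1) > 0. Then for all ζ ∈ [0,σ) and t ∈ (0,T]: ‖u[t]‖_{∞,η} ≤ max( exp(−ζt)·‖u[0]‖_{∞,η}, sup_{0<s≤t} max( r₀(s), r₁(s), ‖f[s]‖_{∞,η}/(σ−ζ) )·exp(−ζ(t−s)) ), where r₀(t) := min( |u(t,0)|/η(0), |μ₀·∂u/∂x(t,0) −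 λ₀·u(t,0)| / |μ₀η'(0) − λ₀η(0)| ) and r₁(t) := min( |u(t,1)|/η(1), |μ₁·∂u/∂x(t,1) + λ₁·u(t,1)| / (μ₁η'(1) + λ₁η(1)) ). -/

import Mathlib

open Set MeasureTheory Filter Topology
open scoped NNReal

/-!
Write `H(s) = ‖u[s]‖_{∞,η}`. At almost every time `r`, take a point `x₀` where `|u(r,·)|/η`
attains its maximum `H(r)` and a sign `ε` with `ε u(r,x₀) = |u(r,x₀)|`. If `x₀` is an endpoint,
the first-order condition for `ε u(r,·)/η` there, together with the sign of the Robin combination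
of `η`, gives `H(r) ≤ r₀(r)` or `H(r) ≤ r₁(r)`. If `x₀` is interior, `ε u(r,·) - H(r) η` has a
local maximum `0` at `x₀`, so its first derivative vanishes and its second is nonpositive; the PDE
and `aη'' + bη' + (σ+c)η ≤ 0` then give `ε u_t(r,x₀) ≤ (‖f[r]‖_{∞,η} - σ H(r)) η(x₀)`. As
`s ↦ ε u(s,x₀)` touches `H(s) η(x₀)` from below at `s = r`, every derivative of `H` at `r` obeys
the same bound. Hence `H' ≤ -ζ H` wherever `H > Q := max(r₀, r₁, ‖f[·]‖_{∞,η}/(σ-ζ))`. Since `H`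
is continuous, and Lipschitz (so absolutely continuous) on compact subintervals of `(0,T)`, this
a.e. inequality keeps `e^{ζ s} H(s)` below `max(H(0), sup_s e^{ζ s} Q(s))`.
-/

theorem mul_le_abs_of_abs_le_one {ε : ℝ} (hε : |ε| ≤ 1) (w : ℝ) : ε * w ≤ |w| :=
  (le_abs_self _).trans <| by rw [abs_mul]; exact mul_le_of_le_one_left (abs_nonneg w) hε

theorem exists_abs_le_one_mul_eq_abs (v : ℝ) : ∃ ε : ℝ, |ε| ≤ 1 ∧ ε * v = |v| := by
  rcases le_total 0 v with h | h
  · exact ⟨1, by simp, by simp [abs_of_nonneg h]⟩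
  · exact ⟨-1, by simp, by simp [abs_of_nonpos h]⟩

theorem IsLocalMaxOn.mul_hasDerivWithinAt_nonpos {f : ℝ → ℝ} {s : Set ℝ} {a d y : ℝ}
    (h : IsLocalMaxOn f s a) (hf : HasDerivWithinAt f d s a) (hy : y ∈ posTangentConeAt s a) :
    y * d ≤ 0 := by
  simpa using h.hasFDerivWithinAt_nonpos hf.hasFDerivWithinAt hy

theorem IsLocalMax.hasDerivAt_deriv_nonpos {f f' : ℝ → ℝ} {x₀ E : ℝ} (h : IsLocalMax f x₀)
    (hf : ∀ᶠ x in 𝓝 x₀, HasDerivAt f (f' x) x) (hf' : HasDerivAt f' E x₀) : E ≤ 0 := by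
  -- if `E > 0` then `f' > 0` just right of `x₀`, and the mean value theorem makes `f` increase
  by_contra! hE
  have h0 : f' x₀ = 0 := h.hasDerivAt_eq_zero hf.self_of_nhds
  have hpos : ∀ᶠ x in 𝓝[>] x₀, 0 < f' x := by
    have := (hasDerivAt_iff_tendsto_slope.mp hf').eventually (eventually_gt_nhds hE)
    filter_upwards [nhdsGT_le_nhdsNE x₀ this, self_mem_nhdsWithin] with x hx hx₀
    rw [slope_def_field, h0, sub_zero] at hx
    exact (div_pos_iff_of_pos_right (sub_pos.mpr hx₀)).mp hx
  obtain ⟨c, hc, hgood⟩ := (nhdsGT_basis x₀).eventually_iff.mp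
    (hpos.and (nhdsWithin_le_nhds (hf.and h)))
  obtain ⟨x, hx₀x, hxc⟩ := exists_between hc
  have hsub : Ioc x₀ x ⊆ Ioo x₀ c := fun z hz => ⟨hz.1, hz.2.trans_lt hxc⟩
  have hcont : ContinuousOn f (Icc x₀ x) := by
    intro z hz
    rcases hz.1.eq_or_lt with rfl | hz₀
    · exact hf.self_of_nhds.continuousAt.continuousWithinAt
    · exact (hgood (hsub ⟨hz₀, hz.2⟩)).2.1.continuousAt.continuousWithinAt
  obtain ⟨ξ, hξ, hslope⟩ := exists_hasDerivAt_eq_slope f f' hx₀x hcont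
    fun z hz => (hgood (hsub (Ioo_subset_Ioc_self hz))).2.1
  have hξpos := (hgood (hsub (Ioo_subset_Ioc_self hξ))).1
  have hfx : f x ≤ f x₀ := (hgood (hsub (right_mem_Ioc.mpr hx₀x))).2.2
  rw [hslope, lt_div_iff₀ (sub_pos.mpr hx₀x)] at hξpos
  linarith

theorem ContinuousOn.sSup_image_Icc {f : ℝ → ℝ → ℝ} {a b c d : ℝ} (hab : a ≤ b) (hcd : c ≤ d)
    (hf : ContinuousOn (fun p : ℝ × ℝ => f p.1 p.2) (Icc a b ×ˢ Icc c d)) :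
    ContinuousOn (fun s => sSup (f s '' Icc c d)) (Icc a b) := by
  set g : ℝ → ℝ → ℝ := fun s x => f (projIcc a b hab s) (projIcc c d hcd x)
  have hproj : Continuous fun p : ℝ × ℝ => ((projIcc a b hab p.1 : ℝ), (projIcc c d hcd p.2 : ℝ)) :=
    ((continuous_subtype_val.comp continuous_projIcc).comp continuous_fst).prodMk
      ((continuous_subtype_val.comp continuous_projIcc).comp continuous_snd)
  have hg : Continuous fun p : ℝ × ℝ => g p.1 p.2 :=
    hf.comp_continuous hproj fun p => ⟨(projIcc a b hab p.1).2, (projIcc c d hcd p.2).2⟩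
  refine ((isCompact_Icc (a := c) (b := d)).continuous_sSup (f := g) hg).continuousOn.congr
    fun s hs => ?_
  refine congrArg sSup (image_congr fun x hx => ?_)
  simp only [g, projIcc_of_mem hab hs, projIcc_of_mem hcd hx]

theorem lipschitzOnWith_sSup_image {f : ℝ → ℝ → ℝ} {I K : Set ℝ} {C : ℝ≥0} (hK : K.Nonempty)
    (hbdd : ∀ s ∈ I, BddAbove (f s '' K)) (hf : ∀ x ∈ K, LipschitzOnWith C (fun s => f s x) I) :
    LipschitzOnWith C (fun s => sSup (f s '' K)) I := by
  have key : ∀ s ∈ I, ∀ s' ∈ I, sSup (f s '' K) ≤ sSup (f s' '' K) + C * dist s s' :=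
    fun s hs s' hs' => csSup_le (hK.image _) <| forall_mem_image.mpr fun x hx => by
      have h := (hf x hx).dist_le_mul s hs s' hs'
      rw [Real.dist_eq, abs_sub_le_iff] at h
      linarith [le_csSup (hbdd s' hs') (mem_image_of_mem _ hx)]
  refine LipschitzOnWith.of_dist_le_mul fun s hs s' hs' => ?_
  rw [Real.dist_eq, abs_sub_le_iff]
  constructor
  · linarith [key s hs s' hs']
  · linarith [dist_comm s s' ▸ key s' hs' s hs]

theorem AbsolutelyContinuousOnInterval.le_of_ae_hasDerivAt_nonpos {f : ℝ → ℝ} {a b : ℝ}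
    (hf : AbsolutelyContinuousOnInterval f a b) (hab : a ≤ b)
    (hd : ∀ᵐ x, x ∈ Ioo a b → ∀ y, HasDerivAt f y x → y ≤ 0) : f b ≤ f a := by
  have hderiv : ∀ᵐ x ∂volume.restrict (Ioc a b), deriv f x ≤ 0 := by
    rw [← ae_restrict_congr_set Ioo_ae_eq_Ioc, ae_restrict_iff' measurableSet_Ioo]
    filter_upwards [hd, hf.ae_differentiableAt] with x hdx hfx hx
    exact hdx hx _ (hfx (by rw [uIcc_of_le hab]; exact Ioo_subset_Icc_self hx)).hasDerivAt
  have := hf.integral_deriv_eq_sub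
  rw [intervalIntegral.integral_of_le hab] at this
  linarith [integral_nonpos_of_ae hderiv]

theorem ContinuousOn.le_of_ae_hasDerivAt_nonpos_above {G : ℝ → ℝ} {t₀ t K : ℝ} (ht : t₀ ≤ t)
    (hG : ContinuousOn G (Icc t₀ t))
    (hac : ∀ a b, t₀ < a → a ≤ b → b < t → AbsolutelyContinuousOnInterval G a b)
    (h₀ : G t₀ ≤ K)
    (hd : ∀ᵐ r, r ∈ Ioo t₀ t → K < G r → ∀ y, HasDerivAt G y r → y ≤ 0) : G t ≤ K := by
  by_contra! hKt
  set S := Icc t₀ t ∩ G ⁻¹' Iic K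
  have hSbdd : BddAbove S := ⟨t, fun s hs => hs.1.2⟩
  set a := sSup S
  have haS : a ∈ S := (hG.preimage_isClosed_of_isClosed isClosed_Icc isClosed_Iic).csSup_mem
    ⟨t₀, left_mem_Icc.mpr ht, h₀⟩ hSbdd
  have hat : a < t := haS.1.2.lt_of_ne fun h => (h ▸ haS.2 : G t ≤ K).not_gt hKt
  have hgt : ∀ r ∈ Ioc a t, K < G r := fun r hr => by
    by_contra! h
    exact hr.1.not_ge (le_csSup hSbdd ⟨⟨haS.1.1.trans hr.1.le, hr.2⟩, h⟩)
  obtain ⟨b, hab, hbt⟩ := exists_between hat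
  have hdec : ∀ a' ∈ Ioo a b, G b ≤ G a' := fun a' ha' =>
    (hac a' b (haS.1.1.trans_lt ha'.1) ha'.2.le hbt).le_of_ae_hasDerivAt_nonpos ha'.2.le <| by
      filter_upwards [hd] with r hr hr'
      exact hr ⟨haS.1.1.trans_lt (ha'.1.trans hr'.1), hr'.2.trans hbt⟩
        (hgt r ⟨ha'.1.trans hr'.1, hr'.2.le.trans hbt.le⟩)
  have hIoo : Ioo a b ∈ 𝓝[>] a := Ioo_mem_nhdsGT hab
  have hcont : ContinuousWithinAt G (Ioi a) a := (hG a haS.1).mono_of_mem_nhdsWithin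
    (mem_of_superset hIoo fun r hr => ⟨haS.1.1.trans hr.1.le, hr.2.le.trans hbt.le⟩)
  have hGb : G b ≤ G a := ge_of_tendsto hcont (eventually_of_mem hIoo hdec)
  exact (hgt b ⟨hab, hbt.le⟩).not_ge (hGb.trans haS.2)

theorem bddAbove_image_mul_exp {Q : ℝ → ℝ} {S : Set ℝ} {ζ t : ℝ} (hζ : 0 ≤ ζ)
    (hS : ∀ s ∈ S, s ≤ t) (hQ : BddAbove (Q '' S)) :
    BddAbove ((fun s => Q s * Real.exp (-ζ * (t - s))) '' S) := by
  obtain ⟨B, hB⟩ := hQ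
  refine ⟨max B 0, forall_mem_image.mpr fun s hs => ?_⟩
  have he : Real.exp (-ζ * (t - s)) ≤ 1 := Real.exp_le_one_iff.mpr
    (mul_nonpos_of_nonpos_of_nonneg (neg_nonpos.mpr hζ) (sub_nonneg.mpr (hS s hs)))
  rcases le_total 0 (Q s) with h | h
  · exact (mul_le_of_le_one_right h he).trans
      ((hB (mem_image_of_mem _ hs)).trans (le_max_left _ _))
  · exact (mul_nonpos_of_nonpos_of_nonneg h (Real.exp_pos _).le).trans (le_max_right _ _)

theorem le_max_of_ae_hasDerivAt_le_neg_mul {H Q : ℝ → ℝ} {ζ t : ℝ} (ht : 0 < t) (hζ : 0 ≤ ζ)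
    (hH : ContinuousOn H (Icc 0 t))
    (hlip : ∀ a b, 0 < a → a ≤ b → b < t → ∃ C, LipschitzOnWith C H (Icc a b))
    (hQ : BddAbove (Q '' Ioc 0 t))
    (hd : ∀ᵐ r, r ∈ Ioo 0 t → Q r < H r → ∀ y, HasDerivAt H y r → y ≤ -ζ * H r) :
    H t ≤ max (Real.exp (-ζ * t) * H 0)
      (sSup ((fun s => Q s * Real.exp (-ζ * (t - s))) '' Ioc 0 t)) := by
  have hQ' := bddAbove_image_mul_exp hζ (fun s hs => hs.2) hQ
  set S := sSup ((fun s => Q s * Real.exp (-ζ * (t - s))) '' Ioc 0 t)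
  set K := max (H 0) (Real.exp (ζ * t) * S)
  set G : ℝ → ℝ := fun s => Real.exp (ζ * s) * H s
  have hexp : ContDiff ℝ 1 fun s : ℝ => Real.exp (ζ * s) := by fun_prop
  have hexp_mul : ∀ r x, Real.exp (-ζ * r) * (Real.exp (ζ * r) * x) = x := fun r x => by
    rw [← mul_assoc, ← Real.exp_add, show -ζ * r + ζ * r = 0 by ring, Real.exp_zero, one_mul]
  have hQK : ∀ r ∈ Ioc 0 t, Real.exp (ζ * r) * Q r ≤ K := fun r hr => by
    have h := mul_le_mul_of_nonneg_left (le_csSup hQ' (mem_image_of_mem _ hr))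
      (Real.exp_pos (ζ * t)).le
    have heq : Real.exp (ζ * t) * (Q r * Real.exp (-ζ * (t - r))) = Real.exp (ζ * r) * Q r := by
      rw [mul_left_comm, ← Real.exp_add]; ring_nf
    exact heq ▸ h.trans (le_max_right _ _)
  have hGt : G t ≤ K := by
    refine (hexp.continuous.continuousOn.mul hH).le_of_ae_hasDerivAt_nonpos_above ht.le
      (fun a b ha hab hbt => ?_) (by simp [G, K]) ?_
    · obtain ⟨C, hC⟩ := hlip a b ha hab hbt
      rw [← uIcc_of_le hab] at hC
      exact hexp.contDiffOn.absolutelyContinuousOnInterval.mul hC.absolutelyContinuousOnInterval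
    · filter_upwards [hd] with r hr hrt hKr y hy
      have hHy : HasDerivAt H (Real.exp (-ζ * r) * (y - ζ * G r)) r := by
        have hHG : H = fun s => Real.exp (-ζ * s) * G s := funext fun s => (hexp_mul s _).symm
        rw [hHG]
        refine (((hasDerivAt_id r).const_mul (-ζ)).exp.mul hy).congr_deriv ?_
        simp only [id]; ring
      have hQH : Q r < H r :=
        lt_of_mul_lt_mul_left ((hQK r ⟨hrt.1, hrt.2.le⟩).trans_lt hKr) (Real.exp_pos _).le
      have hy := hr hrt hQH _ hHy
      rw [← hexp_mul r (H r)] at hy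
      nlinarith [Real.exp_pos (-ζ * r)]
  calc H t = Real.exp (-ζ * t) * G t := (hexp_mul t _).symm
    _ ≤ Real.exp (-ζ * t) * K := mul_le_mul_of_nonneg_left hGt (Real.exp_pos _).le
    _ = _ := by rw [mul_max_of_nonneg _ _ (Real.exp_pos _).le, hexp_mul]

/-- The weighted sup norm `‖v‖_{∞,η}` of the paper, taken over `S`. -/
noncomputable def weightedSup (S : Set ℝ) (η v : ℝ → ℝ) : ℝ := sSup ((fun x => |v x| / η x) '' S)

theorem abs_le_weightedSup_mul {S : Set ℝ} {η v : ℝ → ℝ} {x : ℝ}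
    (hbdd : BddAbove ((fun x => |v x| / η x) '' S)) (hx : x ∈ S) (hη : 0 < η x) :
    |v x| ≤ weightedSup S η v * η x :=
  (div_le_iff₀ hη).mp (le_csSup hbdd (mem_image_of_mem _ hx))

theorem exists_lipschitzOnWith_weightedSup {u ut : ℝ → ℝ → ℝ} {η : ℝ → ℝ} {a b m : ℝ}
    (hm : 0 < m) (hηm : ∀ x ∈ Icc (0:ℝ) 1, m ≤ η x)
    (hu : ∀ s ∈ Icc a b, ∀ x ∈ Icc (0:ℝ) 1, HasDerivAt (fun τ => u τ x) (ut s x) s)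
    (hut : ContinuousOn (fun p : ℝ × ℝ => ut p.1 p.2) (Icc a b ×ˢ Icc 0 1))
    (hbdd : ∀ s ∈ Icc a b, BddAbove ((fun x => |u s x| / η x) '' Icc 0 1)) :
    ∃ C, LipschitzOnWith C (fun s => weightedSup (Icc 0 1) η (u s)) (Icc a b) := by
  obtain ⟨L, hL⟩ := (isCompact_Icc.prod isCompact_Icc).exists_bound_of_continuousOn hut
  refine ⟨(L / m).toNNReal, lipschitzOnWith_sSup_image (nonempty_Icc.mpr zero_le_one) hbdd
    fun x hx => LipschitzOnWith.of_dist_le_mul fun s hs s' hs' => ?_⟩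
  have hηx := hm.trans_le (hηm x hx)
  have hlip := Convex.norm_image_sub_le_of_norm_hasDerivWithin_le
    (fun τ hτ => (hu τ hτ x hx).hasDerivWithinAt) (fun τ hτ => hL (τ, x) ⟨hτ, hx⟩)
    (convex_Icc a b) hs' hs
  rw [Real.norm_eq_abs, Real.norm_eq_abs] at hlip
  rw [Real.dist_eq, Real.dist_eq, ← sub_div, abs_div, abs_of_pos hηx]
  calc |(|u s x| - |u s' x|)| / η x ≤ |u s x - u s' x| / η x :=
        div_le_div_of_nonneg_right (abs_abs_sub_abs_le_abs_sub _ _) hηx.le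
    _ ≤ L * |s - s'| / m :=
        div_le_div₀ (mul_nonneg ((norm_nonneg _).trans (hL (s, x) ⟨hs, hx⟩)) (abs_nonneg _)) hlip hm
          (hηm x hx)
    _ = L / m * |s - s'| := by ring
    _ ≤ (L / m).toNNReal * |s - s'| :=
        mul_le_mul_of_nonneg_right (Real.le_coe_toNNReal _) (abs_nonneg _)

theorem mul_sub_nonpos_of_isMaxOn_abs_div {s : Set ℝ} {v η : ℝ → ℝ} {x₀ v' η' y ε : ℝ}
    (hmax : IsMaxOn (fun x => |v x| / η x) s x₀) (hη : ∀ x ∈ s, 0 < η x) (hx₀ : x₀ ∈ s)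
    (hv : HasDerivWithinAt v v' s x₀) (hηd : HasDerivWithinAt η η' s x₀)
    (hy : y ∈ posTangentConeAt s x₀) (hε : |ε| ≤ 1) (hεv : ε * v x₀ = |v x₀|) :
    y * (ε * v' * η x₀ - |v x₀| * η') ≤ 0 := by
  have hφ : IsMaxOn (fun x => ε * v x / η x) s x₀ := fun x hx => by
    simp only [mem_ofPred_eq, hεv]
    exact (div_le_div_of_nonneg_right (mul_le_abs_of_abs_le_one hε _) (hη x hx).le).trans
      (hmax hx)
  have hη₀ := hη x₀ hx₀
  have h := hφ.localize.mul_hasDerivWithinAt_nonpos ((hv.const_mul ε).div hηd hη₀.ne') hy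
  rw [mul_assoc ε (v x₀), ← mul_assoc ε, hεv, ← mul_div_assoc] at h
  simpa using (div_le_iff₀ (by positivity : (0:ℝ) < η x₀ ^ 2)).mp h

theorem abs_div_le_of_isMaxOn_left {v η : ℝ → ℝ} {v' η' μ lam : ℝ}
    (hmax : IsMaxOn (fun x => |v x| / η x) (Icc 0 1) 0) (hη : ∀ x ∈ Icc (0:ℝ) 1, 0 < η x)
    (hv : HasDerivWithinAt v v' (Icc 0 1) 0) (hηd : HasDerivWithinAt η η' (Icc 0 1) 0)
    (hμ : 0 ≤ μ) (hbc : μ * η' - lam * η 0 < 0) :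
    |v 0| / η 0 ≤ |μ * v' - lam * v 0| / |μ * η' - lam * η 0| := by
  obtain ⟨ε, hε, hεv⟩ := exists_abs_le_one_mul_eq_abs (v 0)
  have hy : (1:ℝ) ∈ posTangentConeAt (Icc 0 1) 0 :=
    mem_posTangentConeAt_of_segment_subset (by rw [zero_add, segment_eq_Icc zero_le_one])
  have hd := mul_sub_nonpos_of_isMaxOn_abs_div hmax hη (left_mem_Icc.mpr zero_le_one) hv hηd hy
    hε hεv
  have habs := mul_le_abs_of_abs_le_one (abs_neg ε ▸ hε) (μ * v' - lam * v 0)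
  have hη₀ := hη 0 (left_mem_Icc.mpr zero_le_one)
  have hεv' : ε * v 0 * (lam * η 0) = |v 0| * (lam * η 0) := by rw [hεv]
  rw [abs_of_neg hbc, div_le_div_iff₀ hη₀ (neg_pos.mpr hbc)]
  linarith [mul_le_mul_of_nonneg_left hd hμ, mul_le_mul_of_nonneg_right habs hη₀.le]

theorem abs_div_le_of_isMaxOn_right {v η : ℝ → ℝ} {v' η' μ lam : ℝ}
    (hmax : IsMaxOn (fun x => |v x| / η x) (Icc 0 1) 1) (hη : ∀ x ∈ Icc (0:ℝ) 1, 0 < η x)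
    (hv : HasDerivWithinAt v v' (Icc 0 1) 1) (hηd : HasDerivWithinAt η η' (Icc 0 1) 1)
    (hμ : 0 ≤ μ) (hbc : 0 < μ * η' + lam * η 1) :
    |v 1| / η 1 ≤ |μ * v' + lam * v 1| / (μ * η' + lam * η 1) := by
  obtain ⟨ε, hε, hεv⟩ := exists_abs_le_one_mul_eq_abs (v 1)
  have hy : (-1:ℝ) ∈ posTangentConeAt (Icc 0 1) 1 :=
    mem_posTangentConeAt_of_segment_subset (by
      rw [add_neg_cancel, segment_symm, segment_eq_Icc zero_le_one])
  have hd := mul_sub_nonpos_of_isMaxOn_abs_div hmax hη (right_mem_Icc.mpr zero_le_one) hv hηd hy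
    hε hεv
  have habs := mul_le_abs_of_abs_le_one hε (μ * v' + lam * v 1)
  have hη₁ := hη 1 (right_mem_Icc.mpr zero_le_one)
  have hεv' : ε * v 1 * (lam * η 1) = |v 1| * (lam * η 1) := by rw [hεv]
  rw [div_le_div_iff₀ hη₁ hbc]
  linarith [mul_le_mul_of_nonneg_left hd hμ, mul_le_mul_of_nonneg_right habs hη₁.le]

theorem mul_deriv_eq_and_le_of_abs_le_mul {v v' η η' : ℝ → ℝ} {x₀ v'' η'' H ε : ℝ}
    (hv : ∀ᶠ x in 𝓝 x₀, HasDerivAt v (v' x) x) (hv' : HasDerivAt v' v'' x₀)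
    (hη : ∀ᶠ x in 𝓝 x₀, HasDerivAt η (η' x) x) (hη' : HasDerivAt η' η'' x₀)
    (hle : ∀ᶠ x in 𝓝 x₀, |v x| ≤ H * η x) (heq : |v x₀| = H * η x₀)
    (hε : |ε| ≤ 1) (hεv : ε * v x₀ = |v x₀|) :
    ε * v' x₀ = H * η' x₀ ∧ ε * v'' ≤ H * η'' := by
  have hmax : IsLocalMax (fun x => ε * v x - H * η x) x₀ := by
    filter_upwards [hle] with x hx
    linarith [mul_le_abs_of_abs_le_one hε (v x)]
  have hθ : ∀ᶠ x in 𝓝 x₀, HasDerivAt (fun x => ε * v x - H * η x) (ε * v' x - H * η' x) x := by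
    filter_upwards [hv, hη] with x hvx hηx using (hvx.const_mul ε).sub (hηx.const_mul H)
  have h1 := hmax.hasDerivAt_eq_zero hθ.self_of_nhds
  have h2 := hmax.hasDerivAt_deriv_nonpos hθ ((hv'.const_mul ε).sub (hη'.const_mul H))
  constructor <;> linarith

theorem mul_le_of_abs_le_mul_of_pde {v v' vt η η' : ℝ → ℝ} {x₀ v'' η'' A B C f₀ H F σ ε : ℝ}
    (hv : ∀ᶠ x in 𝓝 x₀, HasDerivAt v (v' x) x) (hv' : HasDerivAt v' v'' x₀)
    (hη : ∀ᶠ x in 𝓝 x₀, HasDerivAt η (η' x) x) (hη' : HasDerivAt η' η'' x₀)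
    (hpde : vt x₀ = A * v'' + B * v' x₀ + C * v x₀ + f₀)
    (hA : 0 ≤ A) (hcond : A * η'' + B * η' x₀ + (σ + C) * η x₀ ≤ 0) (hf : |f₀| ≤ F * η x₀)
    (hH : 0 ≤ H) (hle : ∀ᶠ x in 𝓝 x₀, |v x| ≤ H * η x) (heq : |v x₀| = H * η x₀)
    (hε : |ε| ≤ 1) (hεv : ε * v x₀ = |v x₀|) :
    ε * vt x₀ ≤ (F - σ * H) * η x₀ := by
  obtain ⟨h1, h2⟩ := mul_deriv_eq_and_le_of_abs_le_mul hv hv' hη hη' hle heq hε hεv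
  calc ε * vt x₀ = A * (ε * v'') + B * (ε * v' x₀) + C * (ε * v x₀) + ε * f₀ := by
        rw [hpde]; ring
    _ ≤ A * (H * η'') + B * (H * η' x₀) + C * (H * η x₀) + F * η x₀ := by
      rw [h1, hεv, heq]
      linarith [mul_le_mul_of_nonneg_left h2 hA, mul_le_abs_of_abs_le_one hε f₀]
    _ = H * (A * η'' + B * η' x₀ + (σ + C) * η x₀) + (F - σ * H) * η x₀ := by ring
    _ ≤ (F - σ * H) * η x₀ := by linarith [mul_nonpos_of_nonneg_of_nonpos hH hcond]

theorem hasDerivAt_mul_eq_of_abs_le_mul {H g : ℝ → ℝ} {r y g' c ε : ℝ}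
    (hle : ∀ᶠ s in 𝓝 r, |g s| ≤ H s * c) (heq : |g r| = H r * c)
    (hε : |ε| ≤ 1) (hεg : ε * g r = |g r|) (hH : HasDerivAt H y r) (hg : HasDerivAt g g' r) :
    y * c = ε * g' := by
  have hmin : IsLocalMin (fun s => H s * c - ε * g s) r := by
    filter_upwards [hle] with s hs
    linarith [mul_le_abs_of_abs_le_one hε (g s)]
  linarith [hmin.hasDerivAt_eq_zero ((hH.mul_const c).sub (hg.const_mul ε))]

theorem ae_hasDerivAt_weightedSup_le {T σ μ₀ μ₁ lam₀ lam₁ : ℝ}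
    {a b c f u ut ux uxx : ℝ → ℝ → ℝ} {η η' η'' : ℝ → ℝ}
    (hu : ∀ s ∈ Icc 0 T, ContinuousOn (u s) (Icc 0 1))
    (hut : ∀ t ∈ Ioo (0:ℝ) T, ∀ x ∈ Icc (0:ℝ) 1, HasDerivAt (fun τ => u τ x) (ut t x) t)
    (hux_bd : ∀ t ∈ Ioo (0:ℝ) T,
      HasDerivWithinAt (u t) (ux t 0) (Icc 0 1) 0 ∧ HasDerivWithinAt (u t) (ux t 1) (Icc 0 1) 1)
    (hpde : ∀ᵐ t ∂(volume.restrict (Ioo 0 T)),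
      (∀ x ∈ Ioo (0:ℝ) 1, HasDerivAt (u t) (ux t x) x) ∧
      (∀ x ∈ Ioo (0:ℝ) 1, HasDerivAt (ux t) (uxx t x) x) ∧
      (∀ x ∈ Ioo (0:ℝ) 1, ut t x = a t x * uxx t x + b t x * ux t x + c t x * u t x + f t x))
    (hf : ∀ t ∈ Ioo (0:ℝ) T, BddAbove ((fun x => |f t x| / η x) '' Ioo 0 1))
    (ha : ∀ t ∈ Ioo (0:ℝ) T, ∀ x ∈ Ioo (0:ℝ) 1, 0 ≤ a t x) (hμ₀ : 0 ≤ μ₀) (hμ₁ : 0 ≤ μ₁)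
    (hη_pos : ∀ x ∈ Icc (0:ℝ) 1, 0 < η x)
    (hη1 : ∀ x ∈ Icc (0:ℝ) 1, HasDerivWithinAt η (η' x) (Icc 0 1) x)
    (hη2 : ∀ x ∈ Icc (0:ℝ) 1, HasDerivWithinAt η' (η'' x) (Icc 0 1) x)
    (hcond : ∀ t ∈ Ioo (0:ℝ) T, ∀ x ∈ Ioo (0:ℝ) 1,
      a t x * η'' x + b t x * η' x + (σ + c t x) * η x ≤ 0)
    (hbc0 : μ₀ * η' 0 - lam₀ * η 0 < 0) (hbc1 : 0 < μ₁ * η' 1 + lam₁ * η 1) :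
    ∀ᵐ r, r ∈ Ioo 0 T → ∀ y, HasDerivAt (fun s => weightedSup (Icc 0 1) η (u s)) y r →
      min (|u r 0| / η 0) (|μ₀ * ux r 0 - lam₀ * u r 0| / |μ₀ * η' 0 - lam₀ * η 0|) <
        weightedSup (Icc 0 1) η (u r) →
      min (|u r 1| / η 1) (|μ₁ * ux r 1 + lam₁ * u r 1| / (μ₁ * η' 1 + lam₁ * η 1)) <
        weightedSup (Icc 0 1) η (u r) →
      y ≤ weightedSup (Ioo 0 1) η (f r) - σ * weightedSup (Icc 0 1) η (u r) := by
  rw [ae_restrict_iff' measurableSet_Ioo] at hpde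
  filter_upwards [hpde] with r hr hrT y hy hB₀ hB₁
  obtain ⟨hux, huxx, hpde_r⟩ := hr hrT
  set H := fun s => weightedSup (Icc 0 1) η (u s)
  have hw : ∀ s ∈ Icc 0 T, ContinuousOn (fun x => |u s x| / η x) (Icc 0 1) := fun s hs =>
    (hu s hs).abs.div (fun x hx => (hη1 x hx).continuousWithinAt) fun x hx => (hη_pos x hx).ne'
  have hle : ∀ s ∈ Icc 0 T, ∀ x ∈ Icc (0:ℝ) 1, |u s x| ≤ H s * η x := fun s hs x hx =>
    abs_le_weightedSup_mul (isCompact_Icc.bddAbove_image (hw s hs)) hx (hη_pos x hx)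
  obtain ⟨xm, hxm, hmax⟩ := isCompact_Icc.exists_isMaxOn (nonempty_Icc.mpr zero_le_one)
    (hw r (Ioo_subset_Icc_self hrT))
  have hHr : H r = |u r xm| / η xm :=
    IsGreatest.csSup_eq ⟨mem_image_of_mem _ hxm, forall_mem_image.mpr hmax⟩
  have hxm' : xm ∈ Ioo 0 1 := by
    refine ⟨hxm.1.lt_of_ne ?_, hxm.2.lt_of_ne ?_⟩ <;> rintro rfl
    · exact hB₀.not_ge <| hHr.le.trans <| le_min le_rfl (abs_div_le_of_isMaxOn_left hmax hη_pos
        (hux_bd r hrT).1 (hη1 0 hxm) hμ₀ hbc0)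
    · exact hB₁.not_ge <| hHr.le.trans <| le_min le_rfl (abs_div_le_of_isMaxOn_right hmax hη_pos
        (hux_bd r hrT).2 (hη1 1 hxm) hμ₁ hbc1)
  have hηxm := hη_pos xm hxm
  have hH₀ : 0 ≤ H r := hHr ▸ div_nonneg (abs_nonneg _) hηxm.le
  have hHxm : |u r xm| = H r * η xm := by rw [hHr, div_mul_cancel₀ _ hηxm.ne']
  obtain ⟨ε, hε, hεv⟩ := exists_abs_le_one_mul_eq_abs (u r xm)
  have hy_eq := hasDerivAt_mul_eq_of_abs_le_mul
    (eventually_of_mem (Icc_mem_nhds hrT.1 hrT.2) fun s hs => hle s hs xm hxm) hHxm hε hεv hy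
    (hut r hrT xm hxm)
  have hIoo : Ioo (0:ℝ) 1 ∈ 𝓝 xm := Ioo_mem_nhds hxm'.1 hxm'.2
  refine le_of_mul_le_mul_right ?_ hηxm
  rw [hy_eq]
  exact mul_le_of_abs_le_mul_of_pde (eventually_of_mem hIoo hux) (huxx xm hxm')
    (eventually_of_mem hIoo fun x hx =>
      (hη1 x (Ioo_subset_Icc_self hx)).hasDerivAt (Icc_mem_nhds hx.1 hx.2))
    ((hη2 xm hxm).hasDerivAt (Icc_mem_nhds hxm'.1 hxm'.2)) (hpde_r xm hxm') (ha r hrT xm hxm')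
    (hcond r hrT xm hxm') (abs_le_weightedSup_mul (hf r hrT) hxm' hηxm)
    hH₀ (eventually_of_mem hIoo fun x hx => hle r (Ioo_subset_Icc_self hrT) x
      (Ioo_subset_Icc_self hx)) hHxm hε hεv

theorem cor2_3_case4_general
    (T : ℝ)
    (a b c f : ℝ → ℝ → ℝ)
    (hf_bdd : ∃ M : ℝ, ∀ t ∈ Set.Ioc (0:ℝ) T, ∀ x ∈ Set.Ioo (0:ℝ) 1, |f t x| ≤ M)
    (u ut ux uxx : ℝ → ℝ → ℝ)
    (hu_cont : ContinuousOn (fun p : ℝ × ℝ => u p.1 p.2) (Set.Icc 0 T ×ˢ Set.Icc 0 1))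
    (hut : ∀ t ∈ Set.Ioo (0:ℝ) T, ∀ x ∈ Set.Icc (0:ℝ) 1,
      HasDerivAt (fun τ => u τ x) (ut t x) t)
    (hut_cont : ContinuousOn (fun p : ℝ × ℝ => ut p.1 p.2) (Set.Ioo 0 T ×ˢ Set.Icc 0 1))
    (hux_bd : ∀ t ∈ Set.Ioc (0:ℝ) T,
      HasDerivWithinAt (u t) (ux t 0) (Set.Icc 0 1) 0 ∧
      HasDerivWithinAt (u t) (ux t 1) (Set.Icc 0 1) 1)
    (hC2_pde : ∀ᵐ t ∂(volume.restrict (Set.Ioo 0 T)),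
      (∀ x ∈ Set.Ioo (0:ℝ) 1, HasDerivAt (u t) (ux t x) x) ∧
      (∀ x ∈ Set.Ioo (0:ℝ) 1, HasDerivAt (ux t) (uxx t x) x) ∧
      ContinuousOn (uxx t) (Set.Ioo 0 1) ∧
      (∀ x ∈ Set.Ioo (0:ℝ) 1,
        ut t x = a t x * uxx t x + b t x * ux t x + c t x * u t x + f t x))
    (ha : ∀ t ∈ Set.Ioo (0:ℝ) T, ∀ x ∈ Set.Ioo (0:ℝ) 1, 0 ≤ a t x)
    (μ₀ μ₁ lam₀ lam₁ : ℝ) (hμ₀ : 0 < μ₀) (hμ₁ : 0 < μ₁)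
    (σ : ℝ)
    (η η' η'' : ℝ → ℝ)
    (hη_pos : ∀ x ∈ Set.Icc (0:ℝ) 1, 0 < η x)
    (hη1 : ∀ x ∈ Set.Icc (0:ℝ) 1, HasDerivWithinAt η (η' x) (Set.Icc 0 1) x)
    (hη2 : ∀ x ∈ Set.Icc (0:ℝ) 1, HasDerivWithinAt η' (η'' x) (Set.Icc 0 1) x)
    (hcond : ∀ t ∈ Set.Ioo (0:ℝ) T, ∀ x ∈ Set.Ioo (0:ℝ) 1,
      a t x * η'' x + b t x * η' x + (σ + c t x) * η x ≤ 0)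
    (hbc0 : μ₀ * η' 0 - lam₀ * η 0 < 0)
    (hbc1 : μ₁ * η' 1 + lam₁ * η 1 > 0) :
    ∀ ζ ∈ Set.Ico (0:ℝ) σ, ∀ t ∈ Set.Ioc (0:ℝ) T,
      sSup ((fun x => |u t x| / η x) '' Set.Icc 0 1) ≤
        max (Real.exp (-ζ * t) * sSup ((fun x => |u 0 x| / η x) '' Set.Icc 0 1))
          (sSup ((fun s =>
              max (max
                  (min (|u s 0| / η 0) (|μ₀ * ux s 0 - lam₀ * u s 0| / |μ₀ * η' 0 - lam₀ * η 0|))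
                  (min (|u s 1| / η 1) (|μ₁ * ux s 1 + lam₁ * u s 1| / (μ₁ * η' 1 + lam₁ * η 1))))
                (sSup ((fun x => |f s x| / η x) '' Set.Ioo 0 1) / (σ - ζ)) *
              Real.exp (-ζ * (t - s))) '' Set.Ioc 0 t)) := by
  intro ζ hζ t ht
  have hσζ : 0 < σ - ζ := sub_pos.mpr hζ.2
  have hη_cont : ContinuousOn η (Icc 0 1) := fun x hx => (hη1 x hx).continuousWithinAt
  obtain ⟨x₀, hx₀, hη_min⟩ :=
    isCompact_Icc.exists_isMinOn (nonempty_Icc.mpr zero_le_one) hη_cont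
  have hw : ContinuousOn (fun p : ℝ × ℝ => |u p.1 p.2| / η p.2) (Icc 0 T ×ˢ Icc 0 1) :=
    hu_cont.abs.div (hη_cont.comp continuous_snd.continuousOn fun p hp => hp.2)
      fun p hp => (hη_pos _ hp.2).ne'
  obtain ⟨B, hB⟩ := (isCompact_Icc.prod isCompact_Icc).bddAbove_image hw
  have hwB : ∀ s ∈ Icc 0 T, ∀ x ∈ Icc (0:ℝ) 1, |u s x| / η x ≤ B := fun s hs x hx =>
    hB (mem_image_of_mem _ (show (s, x) ∈ Icc 0 T ×ˢ Icc 0 1 from ⟨hs, hx⟩))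
  obtain ⟨M, hM⟩ := hf_bdd
  have hfη : ∀ s ∈ Ioc 0 T, ∀ x ∈ Ioo (0:ℝ) 1, |f s x| / η x ≤ M / η x₀ := fun s hs x hx =>
    div_le_div₀ ((abs_nonneg _).trans (hM s hs x hx)) (hM s hs x hx) (hη_pos x₀ hx₀)
      (hη_min (Ioo_subset_Icc_self hx))
  refine le_max_of_ae_hasDerivAt_le_neg_mul ht.1 hζ.1
    ((ContinuousOn.sSup_image_Icc (f := fun s x => |u s x| / η x) (ht.1.le.trans ht.2)
      zero_le_one hw).mono (Icc_subset_Icc_right ht.2))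
    (fun a b ha _ hbt => ?_) ?_ ?_
  · have hsub : Icc a b ⊆ Ioo 0 T := fun s hs =>
      ⟨ha.trans_le hs.1, hs.2.trans_lt (hbt.trans_le ht.2)⟩
    exact exists_lipschitzOnWith_weightedSup (hη_pos x₀ hx₀) (fun x hx => hη_min hx)
      (fun s hs => hut s (hsub hs)) (hut_cont.mono (prod_mono hsub Subset.rfl))
      fun s hs => ⟨B, forall_mem_image.mpr (hwB s (Ioo_subset_Icc_self (hsub hs)))⟩
  · refine ⟨max B (M / η x₀ / (σ - ζ)), forall_mem_image.mpr fun s hs => ?_⟩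
    have hsT : s ∈ Icc 0 T := ⟨hs.1.le, hs.2.trans ht.2⟩
    exact max_le_max
      (max_le ((min_le_left _ _).trans (hwB s hsT 0 (left_mem_Icc.mpr zero_le_one)))
        ((min_le_left _ _).trans (hwB s hsT 1 (right_mem_Icc.mpr zero_le_one))))
      (div_le_div_of_nonneg_right (csSup_le ((nonempty_Ioo.mpr one_pos).image _)
        (forall_mem_image.mpr (hfη s ⟨hs.1, hs.2.trans ht.2⟩))) hσζ.le)
  · have hu : ∀ s ∈ Icc 0 T, ContinuousOn (u s) (Icc 0 1) := fun s hs =>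
      hu_cont.comp (continuous_const.prodMk continuous_id).continuousOn fun x hx => ⟨hs, hx⟩
    filter_upwards [ae_hasDerivAt_weightedSup_le hu hut (fun s hs => hux_bd s ⟨hs.1, hs.2.le⟩)
      (hC2_pde.mono fun s hs => ⟨hs.1, hs.2.1, hs.2.2.2⟩)
      (fun s hs => ⟨_, forall_mem_image.mpr (hfη s ⟨hs.1, hs.2.le⟩)⟩) ha hμ₀.le hμ₁.le hη_pos hη1
      hη2 hcond hbc0 hbc1] with r hr hrt hQ y hy
    obtain ⟨hB01, hF⟩ := max_lt_iff.mp hQ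
    have hHy := hr ⟨hrt.1, hrt.2.trans_le ht.2⟩ y hy (max_lt_iff.mp hB01).1 (max_lt_iff.mp hB01).2
    unfold weightedSup at hHy
    linarith [(div_lt_iff₀ hσζ).mp hF]

/-- **Corollary 2.3** (Karafyllis–Krstic), case (2.11): Robin conditions at both ends. -/
theorem cor2_3_case4
    (T : ℝ) (hT : 0 < T)
    (a b c f : ℝ → ℝ → ℝ)
    (hf_bdd : ∃ M : ℝ, ∀ t ∈ Set.Ioc (0:ℝ) T, ∀ x ∈ Set.Ioo (0:ℝ) 1, |f t x| ≤ M)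
    (u ut ux uxx : ℝ → ℝ → ℝ)
    (hu_cont : ContinuousOn (fun p : ℝ × ℝ => u p.1 p.2) (Set.Icc 0 T ×ˢ Set.Icc 0 1))
    (hut : ∀ t ∈ Set.Ioo (0:ℝ) T, ∀ x ∈ Set.Icc (0:ℝ) 1,
      HasDerivAt (fun τ => u τ x) (ut t x) t)
    (hut_cont : ContinuousOn (fun p : ℝ × ℝ => ut p.1 p.2) (Set.Ioo 0 T ×ˢ Set.Icc 0 1))
    (hux_bd : ∀ t ∈ Set.Ioc (0:ℝ) T,
      HasDerivWithinAt (u t) (ux t 0) (Set.Icc 0 1) 0 ∧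
      HasDerivWithinAt (u t) (ux t 1) (Set.Icc 0 1) 1)
    (hC2_pde : ∀ᵐ t ∂(volume.restrict (Set.Ioo 0 T)),
      (∀ x ∈ Set.Ioo (0:ℝ) 1, HasDerivAt (u t) (ux t x) x) ∧
      (∀ x ∈ Set.Ioo (0:ℝ) 1, HasDerivAt (ux t) (uxx t x) x) ∧
      ContinuousOn (uxx t) (Set.Ioo 0 1) ∧
      (∀ x ∈ Set.Ioo (0:ℝ) 1,
        ut t x = a t x * uxx t x + b t x * ux t x + c t x * u t x + f t x))
    (ha : ∀ t ∈ Set.Ioo (0:ℝ) T, ∀ x ∈ Set.Ioo (0:ℝ) 1, 0 ≤ a t x)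
    (μ₀ μ₁ lam₀ lam₁ : ℝ) (hμ₀ : 0 < μ₀) (hμ₁ : 0 < μ₁)
    (σ : ℝ) (hσ : 0 < σ)
    (η η' η'' : ℝ → ℝ)
    (hη_pos : ∀ x ∈ Set.Icc (0:ℝ) 1, 0 < η x)
    (hη1 : ∀ x ∈ Set.Icc (0:ℝ) 1, HasDerivWithinAt η (η' x) (Set.Icc 0 1) x)
    (hη2 : ∀ x ∈ Set.Icc (0:ℝ) 1, HasDerivWithinAt η' (η'' x) (Set.Icc 0 1) x)
    (hη''_cont : ContinuousOn η'' (Set.Icc 0 1))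
    (hcond : ∀ t ∈ Set.Ioo (0:ℝ) T, ∀ x ∈ Set.Ioo (0:ℝ) 1,
      a t x * η'' x + b t x * η' x + (σ + c t x) * η x ≤ 0)
    (hbc0 : μ₀ * η' 0 - lam₀ * η 0 < 0)
    (hbc1 : μ₁ * η' 1 + lam₁ * η 1 > 0) :
    ∀ ζ ∈ Set.Ico (0:ℝ) σ, ∀ t ∈ Set.Ioc (0:ℝ) T,
      sSup ((fun x => |u t x| / η x) '' Set.Icc 0 1) ≤
        max (Real.exp (-ζ * t) * sSup ((fun x => |u 0 x| / η x) '' Set.Icc 0 1))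
          (sSup ((fun s =>
              max (max
                  (min (|u s 0| / η 0) (|μ₀ * ux s 0 - lam₀ * u s 0| / |μ₀ * η' 0 - lam₀ * η 0|))
                  (min (|u s 1| / η 1) (|μ₁ * ux s 1 + lam₁ * u s 1| / (μ₁ * η' 1 + lam₁ * η 1))))
                (sSup ((fun x => |f s x| / η x) '' Set.Ioo 0 1) / (σ - ζ)) *
              Real.exp (-ζ * (t - s))) '' Set.Ioc 0 t)) :=
  cor2_3_case4_general T a b c f hf_bdd u ut ux uxx hu_cont hut hut_cont hux_bd hC2_pde ha μ₀ μ₁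
    lam₀ lam₁ hμ₀ hμ₁ σ η η' η'' hη_pos hη1 hη2 hcond hbc0 hbc1
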